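/- Let τ be a renewal process whose gap distribution satisfies a large deviation principle: J̄(t) := lim_n −(1/n) log P(τ_n ≤ (μ − t)n) exists for t ∈ (0, μ), where μ = E[τ_1] < ∞, and J̄(t) = o(t) as t ↓ 0. Let σ be an independent renewal process with E[σ_1] ≥ μ. Then for every ε > 0 there exists m_0 such that for all m ≥ m_0, liminf_{L→∞} (1/L) E_σ[log P_τ(τ_{mL} ≤ σ_{mL})] ≥ −ε. -/

import Mathlib

/-!
Let `d` be the smallest value taken by a gap with positive probability and `p = P(X = d) > 0`.
Almost surely `τ_n ≥ d n`, and `τ_n = d n` with probability `p ^ n`; hence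
`log P(τ_n ≤ k) ≥ n log p` for every `k` (for `k < d n` because `log 0 = 0` in Lean).

If `d < μ₀`, put `t = (μ₀ - d) / m`. By the law of large numbers `σ_{mL} ≥ (μ₀ - t) m L` with
probability tending to one as `L → ∞`; there the integrand is at least
`log P(τ_{mL} ≤ (μ₀ - t) m L) ≈ -m L J(t)`, elsewhere at least `m L log p`. So the liminf is at
least `-m J(t) = -(μ₀ - d) J(t) / t`, which tends to `0` as `m → ∞` because `J(t) = o(t)`.
If `d = μ₀`, the gaps equal `d` almost surely, so `p = 1` and the integrand vanishes.
-/

open MeasureTheory ProbabilityTheory Filter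

/-- `X` is an i.i.d. sequence of measurable random variables. -/
def IIDGaps {Ω : Type*} [MeasurableSpace Ω] (X : ℕ → Ω → ℕ) (μ : Measure Ω) : Prop :=
  (∀ i, Measurable (X i)) ∧
  iIndepFun (m := fun _ : ℕ => (inferInstance : MeasurableSpace ℕ)) X μ ∧
  (∀ i, Measure.map (X i) μ = Measure.map (X 0) μ)

open Finset Real Topology

section Preliminaries

variable {Ω : Type*} [MeasurableSpace Ω] {μ : Measure Ω}

lemma exists_measure_preimage_singleton_ne_zero_ae_le [NeZero μ] (Z : Ω → ℕ) :
    ∃ d, μ (Z ⁻¹' {d}) ≠ 0 ∧ ∀ᵐ ω ∂μ, d ≤ Z ω := by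
  classical
  have hex : ∃ d, μ (Z ⁻¹' {d}) ≠ 0 := by
    by_contra! h
    have hU : ⋃ k, Z ⁻¹' {k} = Set.univ := by ext; simp
    exact NeZero.ne μ (Measure.measure_univ_eq_zero.1 (hU ▸ measure_iUnion_null h))
  refine ⟨Nat.find hex, Nat.find_spec hex, ?_⟩
  have hlt : {ω | ¬Nat.find hex ≤ Z ω} = ⋃ k ∈ Set.Iio (Nat.find hex), Z ⁻¹' {k} := by
    ext; simp
  rw [ae_iff, hlt, measure_biUnion_null_iff (Set.to_countable _)]
  exact fun k hk => not_not.1 (Nat.find_min hex hk)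

lemma add_one_sub_measureReal_le_integral [IsProbabilityMeasure μ] {Z : Ω → ℕ}
    (hZ : Measurable Z) (hint : Integrable (fun ω => (Z ω : ℝ)) μ) {d : ℕ}
    (hd : ∀ᵐ ω ∂μ, d ≤ Z ω) :
    d + (1 - μ.real (Z ⁻¹' {d})) ≤ ∫ ω, (Z ω : ℝ) ∂μ := by
  have hs : MeasurableSet (Z ⁻¹' {d}) := hZ (measurableSet_singleton d)
  have hle : ∀ᵐ ω ∂μ, (d : ℝ) + (Z ⁻¹' {d})ᶜ.indicator 1 ω ≤ Z ω := by
    filter_upwards [hd] with ω hω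
    by_cases h : Z ω = d
    · simp [h]
    · have : d + 1 ≤ Z ω := by omega
      simp only [Set.indicator_of_mem (show ω ∈ (Z ⁻¹' {d})ᶜ from h), Pi.one_apply]
      exact_mod_cast this
  calc (d : ℝ) + (1 - μ.real (Z ⁻¹' {d}))
      = ∫ ω, ((d : ℝ) + (Z ⁻¹' {d})ᶜ.indicator 1 ω) ∂μ := by
        rw [integral_add (integrable_const _) ((integrable_const 1).indicator hs.compl),
          integral_indicator_one hs.compl, probReal_compl_eq_one_sub hs]
        simp
    _ ≤ ∫ ω, (Z ω : ℝ) ∂μ :=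
        integral_mono_ae ((integrable_const _).add ((integrable_const 1).indicator hs.compl))
          hint hle

lemma add_measureReal_mul_le_integral [IsProbabilityMeasure μ] {g : Ω → ℝ}
    (hg : Integrable g μ) {s : Set Ω} (hs : MeasurableSet s) {a b : ℝ} (ha : a ≤ 0)
    (hgood : ∀ x ∉ s, a ≤ g x) (hbad : ∀ x ∈ s, b ≤ g x) :
    a + μ.real s * b ≤ ∫ x, g x ∂μ := by
  have hle : ∀ x, a + s.indicator (fun _ => b) x ≤ g x := by
    intro x
    by_cases hx : x ∈ s
    · simp only [Set.indicator_of_mem hx]; linarith [hbad x hx]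
    · simp only [Set.indicator_of_notMem hx]; linarith [hgood x hx]
  calc a + μ.real s * b = ∫ x, (a + s.indicator (fun _ => b) x) ∂μ := by
        rw [integral_add (integrable_const _) ((integrable_const b).indicator hs),
          integral_indicator_const b hs]
        simp
    _ ≤ ∫ x, g x ∂μ :=
        integral_mono ((integrable_const _).add ((integrable_const b).indicator hs)) hg hle

lemma tendsto_mul_comp_div_of_tendsto_div {J : ℝ → ℝ}
    (hJ : Tendsto (fun t => J t / t) (𝓝[>] 0) (𝓝 0)) {c : ℝ} (hc : 0 < c) :
    Tendsto (fun m : ℕ => (m : ℝ) * J (c / m)) atTop (𝓝 0) := by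
  have ht : Tendsto (fun m : ℕ => c / m) atTop (𝓝[>] 0) :=
    tendsto_nhdsWithin_iff.2 ⟨tendsto_const_div_atTop_nhds_zero_nat c,
      (eventually_gt_atTop 0).mono fun m hm => div_pos hc (Nat.cast_pos.2 hm)⟩
  have h := (hJ.comp ht).const_mul c
  rw [mul_zero] at h
  refine h.congr' ((eventually_gt_atTop 0).mono fun m hm => ?_)
  have : (m : ℝ) ≠ 0 := Nat.cast_ne_zero.2 hm.ne'
  simp only [Function.comp_apply]
  field_simp

end Preliminaries

namespace IIDGaps

variable {Ω : Type*} [MeasurableSpace Ω] {μ : Measure Ω} {X : ℕ → Ω → ℕ}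

lemma identDistrib (hX : IIDGaps X μ) (i : ℕ) : IdentDistrib (X i) (X 0) μ μ :=
  ⟨(hX.1 i).aemeasurable, (hX.1 0).aemeasurable, hX.2.2 i⟩

lemma tendsto_measureReal_sum_lt [IsProbabilityMeasure μ] (hX : IIDGaps X μ)
    (hint : Integrable (fun ω => (X 0 ω : ℝ)) μ) {c : ℝ} (hc : c < ∫ ω, (X 0 ω : ℝ) ∂μ) :
    Tendsto (fun n : ℕ => μ.real {ω | ((∑ i ∈ range n, X i ω : ℕ) : ℝ) < c * n}) atTop
      (𝓝 0) := by
  set E := ∫ ω, (X 0 ω : ℝ) ∂μ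
  have hslln := strong_law_ae (μ := μ) (fun i ω => (X i ω : ℝ)) hint
    (fun i j hij =>
      (hX.2.1.comp (fun _ => ((↑·) : ℕ → ℝ)) fun _ => measurable_from_top).indepFun hij)
    (fun i => (hX.identDistrib i).comp measurable_from_top)
  have hmeas : TendstoInMeasure μ
      (fun (n : ℕ) ω => (n : ℝ)⁻¹ • ∑ i ∈ range n, (X i ω : ℝ)) atTop (fun _ => E) :=
    tendstoInMeasure_of_tendsto_ae (fun n => by have := hX.1; fun_prop) hslln
  have hfar := hmeas (ENNReal.ofReal (E - c)) (ENNReal.ofReal_pos.2 (sub_pos.2 hc))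
  refine squeeze_zero (fun n => measureReal_nonneg) (fun n => measureReal_mono ?_)
    ((ENNReal.tendsto_toReal ENNReal.zero_ne_top).comp hfar)
  intro ω hω
  simp only [Set.mem_ofPred_eq, Nat.cast_sum] at hω ⊢
  rcases Nat.eq_zero_or_pos n with rfl | hn
  · simp at hω
  have hmean : (n : ℝ)⁻¹ * ∑ i ∈ range n, (X i ω : ℝ) < c := by
    rw [inv_mul_lt_iff₀ (Nat.cast_pos.2 hn)]; linarith
  rw [edist_dist, Real.dist_eq, smul_eq_mul]
  exact ENNReal.ofReal_le_ofReal (by rw [abs_sub_comm]; exact (le_abs_self _).trans' (by linarith))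

end IIDGaps

section RenewalCDF

variable {Ω Ω' : Type*} [MeasurableSpace Ω] [MeasurableSpace Ω'] {μ : Measure Ω}
  {X : ℕ → Ω → ℕ}

-- The distribution function of `τ_n`, at real thresholds so that both the large-deviation events
-- `τ_n ≤ (μ₀ - t) n` and the events `τ_n ≤ σ_n` are among its values.
def renewalCDF (μ : Measure Ω) (X : ℕ → Ω → ℕ) (n : ℕ) (x : ℝ) : ℝ :=
  μ.real {ω | ((∑ i ∈ range n, X i ω : ℕ) : ℝ) ≤ x}

lemma renewalCDF_natCast (μ : Measure Ω) (X : ℕ → Ω → ℕ) (n k : ℕ) :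
    renewalCDF μ X n k = (μ {ω | ∑ i ∈ range n, X i ω ≤ k}).toReal := by
  simp only [renewalCDF, measureReal_def, Nat.cast_le]

lemma renewalCDF_mono [IsFiniteMeasure μ] (n : ℕ) : Monotone (renewalCDF μ X n) :=
  fun _ _ hxy => measureReal_mono fun _ hω => le_trans hω hxy

lemma log_renewalCDF_nonpos [IsProbabilityMeasure μ] (n : ℕ) (x : ℝ) :
    log (renewalCDF μ X n x) ≤ 0 :=
  log_nonpos measureReal_nonneg measureReal_le_one

lemma IIDGaps.pow_le_renewalCDF [IsFiniteMeasure μ] (hX : IIDGaps X μ) {d n : ℕ} {x : ℝ}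
    (hx : (d * n : ℝ) ≤ x) : μ.real (X 0 ⁻¹' {d}) ^ n ≤ renewalCDF μ X n x := by
  have hinter : μ (⋂ i ∈ range n, X i ⁻¹' {d}) = μ (X 0 ⁻¹' {d}) ^ n := by
    rw [hX.2.1.measure_inter_preimage_eq_mul _ fun _ _ => measurableSet_singleton d,
      prod_congr rfl fun i _ => (hX.identDistrib i).measure_mem_eq (measurableSet_singleton d),
      prod_const, card_range]
  rw [measureReal_def, ← ENNReal.toReal_pow, ← hinter, ← measureReal_def]
  refine measureReal_mono fun ω hω => ?_
  simp only [Set.mem_iInter, Set.mem_preimage, Set.mem_singleton_iff] at hω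
  simp only [Set.mem_ofPred_eq, sum_congr rfl hω, sum_const, card_range, smul_eq_mul]
  push_cast
  linarith

lemma IIDGaps.renewalCDF_eq_zero (hX : IIDGaps X μ) {d n : ℕ} (hd : ∀ᵐ ω ∂μ, d ≤ X 0 ω)
    {x : ℝ} (hx : x < d * n) : renewalCDF μ X n x = 0 := by
  have hall : ∀ᵐ ω ∂μ, ∀ i, d ≤ X i ω :=
    ae_all_iff.2 fun i => (hX.identDistrib i).symm.ae_snd (p := (d ≤ ·)) (.of_discrete) hd
  rw [renewalCDF, measureReal_def, ENNReal.toReal_eq_zero_iff,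
    measure_eq_zero_iff_ae_notMem]
  left
  filter_upwards [hall] with ω hω
  have hsum : d * n ≤ ∑ i ∈ range n, X i ω := by
    simpa [mul_comm] using card_nsmul_le_sum (range n) (X · ω) d fun i _ => hω i
  simp only [not_le]
  exact hx.trans_le (by exact_mod_cast hsum)

lemma IIDGaps.mul_log_le_log_renewalCDF [IsProbabilityMeasure μ] (hX : IIDGaps X μ) {d : ℕ}
    (hd : ∀ᵐ ω ∂μ, d ≤ X 0 ω) (hp : 0 < μ.real (X 0 ⁻¹' {d})) (n : ℕ) (x : ℝ) :
    n * log (μ.real (X 0 ⁻¹' {d})) ≤ log (renewalCDF μ X n x) := by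
  rcases lt_or_ge x (d * n) with hx | hx
  · rw [hX.renewalCDF_eq_zero hd hx, log_zero]
    exact mul_nonpos_of_nonneg_of_nonpos n.cast_nonneg (log_nonpos hp.le measureReal_le_one)
  · rw [← log_pow]
    exact log_le_log (pow_pos hp n) (hX.pow_le_renewalCDF hx)


variable {μτ : Measure Ω} {μσ : Measure Ω'} [IsProbabilityMeasure μτ] [IsProbabilityMeasure μσ]

lemma IIDGaps.integrable_log_renewalCDF_comp (hX : IIDGaps X μτ) {d : ℕ}
    (hd : ∀ᵐ ω ∂μτ, d ≤ X 0 ω) (hp : 0 < μτ.real (X 0 ⁻¹' {d})) (n : ℕ) {Z : Ω' → ℕ}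
    (hZ : Measurable Z) : Integrable (fun ω' => log (renewalCDF μτ X n (Z ω'))) μσ := by
  refine .of_bound ((measurable_from_top (f := fun k : ℕ => log (renewalCDF μτ X n k))).comp
    hZ).aestronglyMeasurable (-(n * log (μτ.real (X 0 ⁻¹' {d})))) (ae_of_all _ fun ω' => ?_)
  rw [norm_eq_abs, abs_of_nonpos (log_renewalCDF_nonpos _ _), neg_le_neg_iff]
  exact hX.mul_log_le_log_renewalCDF hd hp n _

lemma IIDGaps.log_renewalCDF_add_le_integral (hX : IIDGaps X μτ) {d : ℕ}
    (hd : ∀ᵐ ω ∂μτ, d ≤ X 0 ω) (hp : 0 < μτ.real (X 0 ⁻¹' {d})) {c : ℝ} (hdc : d ≤ c) (n : ℕ)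
    {Z : Ω' → ℕ} (hZ : Measurable Z) :
    log (renewalCDF μτ X n (c * n)) +
        μσ.real {ω' | (Z ω' : ℝ) < c * n} * (n * log (μτ.real (X 0 ⁻¹' {d})))
      ≤ ∫ ω', log (renewalCDF μτ X n (Z ω')) ∂μσ := by
  have hpos : 0 < renewalCDF μτ X n (c * n) :=
    (pow_pos hp n).trans_le (hX.pow_le_renewalCDF (by gcongr))
  refine add_measureReal_mul_le_integral (hX.integrable_log_renewalCDF_comp hd hp n hZ)
    (measurableSet_lt (measurable_from_top.comp hZ) measurable_const)
    (log_renewalCDF_nonpos _ _) (fun ω' hω' => ?_)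
    (fun ω' _ => hX.mul_log_le_log_renewalCDF hd hp n _)
  exact log_le_log hpos (renewalCDF_mono n (not_lt.1 hω'))

theorem IIDGaps.neg_mul_le_liminf_integral_log_renewalCDF (hX : IIDGaps X μτ) {d : ℕ}
    (hd : ∀ᵐ ω ∂μτ, d ≤ X 0 ω) (hp : 0 < μτ.real (X 0 ⁻¹' {d})) {S : ℕ → Ω' → ℕ}
    (hS : ∀ n, Measurable (S n)) {c J : ℝ} (hdc : d ≤ c)
    (hJ : Tendsto (fun n : ℕ => -(1 / (n : ℝ)) * log (renewalCDF μτ X n (c * n))) atTop (𝓝 J))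
    (hSc : Tendsto (fun n : ℕ => μσ.real {ω' | (S n ω' : ℝ) < c * n}) atTop (𝓝 0))
    {m : ℕ} (hm : 0 < m) :
    -(m * J) ≤ liminf (fun L : ℕ => (L : ℝ)⁻¹ *
      ∫ ω', log (renewalCDF μτ X (m * L) (S (m * L) ω')) ∂μσ) atTop := by
  have hmL : Tendsto (fun L => m * L) atTop atTop :=
    tendsto_atTop_mono (fun L => Nat.le_mul_of_pos_left L hm) tendsto_id
  set G := fun L : ℕ => (L : ℝ)⁻¹ * log (renewalCDF μτ X (m * L) (c * (m * L : ℕ)))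
    + μσ.real {ω' | (S (m * L) ω' : ℝ) < c * (m * L : ℕ)} *
      (m * log (μτ.real (X 0 ⁻¹' {d})))
  have hG : Tendsto G atTop (𝓝 (-(m * J))) := by
    have hscale : ∀ L : ℕ, 0 < L → ∀ ℓ : ℝ,
        -(m : ℝ) * (-(1 / ((m * L : ℕ) : ℝ)) * ℓ) = (L : ℝ)⁻¹ * ℓ := by
      intro L hL ℓ
      have : (L : ℝ) ≠ 0 := Nat.cast_ne_zero.2 hL.ne'
      have : (m : ℝ) ≠ 0 := Nat.cast_ne_zero.2 hm.ne'
      push_cast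
      field_simp
    have hfirst := ((hJ.comp hmL).const_mul (-(m : ℝ))).congr' <|
      (eventually_gt_atTop 0).mono fun L hL => hscale L hL _
    have := hfirst.add ((hSc.comp hmL).mul_const (m * log (μτ.real (X 0 ⁻¹' {d}))))
    rwa [zero_mul, add_zero, neg_mul] at this
  have hGf : ∀ᶠ L in atTop, G L ≤ (L : ℝ)⁻¹ *
      ∫ ω', log (renewalCDF μτ X (m * L) (S (m * L) ω')) ∂μσ := by
    filter_upwards [eventually_gt_atTop 0] with L hL
    have hL' : (0 : ℝ) < L := Nat.cast_pos.2 hL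
    refine le_trans (le_of_eq ?_) (mul_le_mul_of_nonneg_left
      (hX.log_renewalCDF_add_le_integral hd hp hdc (m * L) (hS (m * L))) (inv_pos.2 hL').le)
    simp only [G, Nat.cast_mul]
    field_simp
  have hnonpos : ∀ L : ℕ, (L : ℝ)⁻¹ *
      ∫ ω', log (renewalCDF μτ X (m * L) (S (m * L) ω')) ∂μσ ≤ 0 := fun L =>
    mul_nonpos_of_nonneg_of_nonpos (by positivity)
      (integral_nonpos fun _ => log_renewalCDF_nonpos _ _)
  rw [← hG.liminf_eq]
  exact liminf_le_liminf hGf hG.isBoundedUnder_ge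
    (isBoundedUnder_of ⟨0, hnonpos⟩).isCoboundedUnder_ge

end RenewalCDF

theorem stmt14_general {Ω Ω' : Type*} [MeasurableSpace Ω] [MeasurableSpace Ω']
    (μτ : Measure Ω) [IsProbabilityMeasure μτ]
    (μσ : Measure Ω') [IsProbabilityMeasure μσ]
    (X : ℕ → Ω → ℕ) (hX : IIDGaps X μτ)
    (Y : ℕ → Ω' → ℕ) (hY : IIDGaps Y μσ)
    (hXint : Integrable (fun ω => (X 0 ω : ℝ)) μτ)
    (hYint : Integrable (fun ω => (Y 0 ω : ℝ)) μσ)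
    (μ₀ : ℝ) (hμ₀ : μ₀ = ∫ ω, (X 0 ω : ℝ) ∂μτ)
    (hmean : μ₀ ≤ ∫ ω, (Y 0 ω : ℝ) ∂μσ)
    (J : ℝ → ℝ)
    (hJ : ∀ t : ℝ, t ∈ Set.Ioo 0 μ₀ →
      Tendsto (fun n : ℕ => -(1 / (n : ℝ)) *
        Real.log ((μτ {ω | ((∑ i ∈ Finset.range n, X i ω : ℕ) : ℝ)
          ≤ (μ₀ - t) * n}).toReal)) atTop (nhds (J t)))
    (hJo : Tendsto (fun t => J t / t) (nhdsWithin 0 (Set.Ioi 0)) (nhds 0)) :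
    ∀ ε > (0 : ℝ), ∃ m₀ : ℕ, ∀ m : ℕ, m₀ ≤ m →
      -ε ≤ liminf (fun L : ℕ => (L : ℝ)⁻¹ *
        ∫ ω', Real.log ((μτ {ω | (∑ i ∈ Finset.range (m * L), X i ω)
          ≤ (∑ i ∈ Finset.range (m * L), Y i ω')}).toReal) ∂μσ) atTop := by
  intro ε hε
  obtain ⟨d, hd_atom, hd⟩ := exists_measure_preimage_singleton_ne_zero_ae_le (μ := μτ) (X 0)
  have hp : 0 < μτ.real (X 0 ⁻¹' {d}) := ENNReal.toReal_pos hd_atom (measure_ne_top _ _)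
  simp only [← renewalCDF_natCast]
  by_cases hdμ : (d : ℝ) < μ₀
  · obtain ⟨m₀, hm₀⟩ := eventually_atTop.1 <|
      (tendsto_mul_comp_div_of_tendsto_div hJo (sub_pos.2 hdμ)).eventually (gt_mem_nhds hε)
    -- `m ≥ 2` keeps `t < μ₀` also when `d = 0`.
    refine ⟨m₀ + 2, fun m hm => ?_⟩
    have hm' : (1 : ℝ) < m := by exact_mod_cast (show 1 < m by omega)
    set t := (μ₀ - d) / m
    have ht : 0 < t := div_pos (sub_pos.2 hdμ) (by linarith)
    have hdt : (d : ℝ) < μ₀ - t := by linarith [div_lt_self (sub_pos.2 hdμ) hm']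
    calc -ε ≤ -(m * J t) := by linarith [hm₀ m (by omega)]
      _ ≤ _ := hX.neg_mul_le_liminf_integral_log_renewalCDF hd hp
        (fun n => Finset.measurable_sum _ fun i _ => hY.1 i) hdt.le
        (hJ t ⟨ht, by linarith [(Nat.cast_nonneg d : (0 : ℝ) ≤ d)]⟩)
        (hY.tendsto_measureReal_sum_lt hYint (by linarith)) (by omega)
  · have hp1 : μτ.real (X 0 ⁻¹' {d}) = 1 := by
      have := add_one_sub_measureReal_le_integral (hX.1 0) hXint hd
      linarith [measureReal_le_one (μ := μτ) (s := X 0 ⁻¹' {d})]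
    have hlog : ∀ n x, log (renewalCDF μτ X n x) = 0 := fun n x =>
      le_antisymm (log_renewalCDF_nonpos n x)
        (by simpa [hp1] using hX.mul_log_le_log_renewalCDF hd hp n x)
    exact ⟨0, fun m _ => by simp [hlog, hε.le]⟩

/-- **Cost of squeezing `τ` below `σ` is negligible (finite-mean case).**
Let `τ` have i.i.d. gaps `X ≥ 1` with finite mean `μ₀ = E[τ₁]`, satisfying a large
deviation principle `J̄(t) = lim_n -(1/n) log P(τ_n ≤ (μ₀ - t)n)` for `t ∈ (0, μ₀)`,
with `J̄(t) = o(t)` as `t ↓ 0`.  Let `σ` have i.i.d. gaps `Y` with `E[σ₁] ≥ μ₀`.  Then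
for every `ε > 0` there is `m₀` such that for all `m ≥ m₀`,
`liminf_{L→∞} (1/L) E_σ[log P_τ(τ_{mL} ≤ σ_{mL})] ≥ -ε`. -/
theorem stmt14 {Ω Ω' : Type*} [MeasurableSpace Ω] [MeasurableSpace Ω']
    (μτ : Measure Ω) [IsProbabilityMeasure μτ]
    (μσ : Measure Ω') [IsProbabilityMeasure μσ]
    (X : ℕ → Ω → ℕ) (hX : IIDGaps X μτ) (hXpos : ∀ i ω, 1 ≤ X i ω)
    (Y : ℕ → Ω' → ℕ) (hY : IIDGaps Y μσ)
    (hXint : Integrable (fun ω => (X 0 ω : ℝ)) μτ)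
    (hYint : Integrable (fun ω => (Y 0 ω : ℝ)) μσ)
    (μ₀ : ℝ) (hμ₀ : μ₀ = ∫ ω, (X 0 ω : ℝ) ∂μτ)
    (hmean : μ₀ ≤ ∫ ω, (Y 0 ω : ℝ) ∂μσ)
    (J : ℝ → ℝ)
    (hJ : ∀ t : ℝ, t ∈ Set.Ioo 0 μ₀ →
      Tendsto (fun n : ℕ => -(1 / (n : ℝ)) *
        Real.log ((μτ {ω | ((∑ i ∈ Finset.range n, X i ω : ℕ) : ℝ)
          ≤ (μ₀ - t) * n}).toReal)) atTop (nhds (J t)))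
    (hJo : Tendsto (fun t => J t / t) (nhdsWithin 0 (Set.Ioi 0)) (nhds 0)) :
    ∀ ε > (0 : ℝ), ∃ m₀ : ℕ, ∀ m : ℕ, m₀ ≤ m →
      -ε ≤ liminf (fun L : ℕ => (L : ℝ)⁻¹ *
        ∫ ω', Real.log ((μτ {ω | (∑ i ∈ Finset.range (m * L), X i ω)
          ≤ (∑ i ∈ Finset.range (m * L), Y i ω')}).toReal) ∂μσ) atTop :=
  stmt14_general μτ μσ X hX Y hY hXint hYint μ₀ hμ₀ hmean J hJ hJo
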